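/- Consider the ROCP feasible set and objective f for given weights μ_1, ..., μ_n ≥ 0 and degrees d_1 ≥ ... ≥ d_n ≥ 1. If X is an optimal solution of ROCP, then the matrix X'' = (X + X')/2, where X' is obtained from X by reversing the order of its columns (x'_{ik} = x_{i,q−k+1}), is a feasible symmetric solution of ROCP (x''_{ik} = x''_{i,q−k+1} for all i,k) and is also optimal. -/

import Mathlib

open Matrix Finset

/-- The ROCP objective `f(X) = (1/2) ∑_{i,j} ∑_{k,l} μ_i x_{ik} μ_j x_{jl} |k - l|`. -/
noncomputable def fROCP {n q : ℕ} (μ : Fin n → ℝ) (X : Matrix (Fin n) (Fin q) ℝ) : ℝ :=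
  (1 / 2) * ∑ i, ∑ j, ∑ k, ∑ l,
    μ i * X i k * (μ j * X j l) * |((k : ℕ) : ℝ) - ((l : ℕ) : ℝ)|

/-- The feasible set of the relaxed optimal caterpillar problem (ROCP): box constraints,
unique assignment of each vertex, one internal vertex per backbone position, and balance
of vertex degrees (positions `k = 1, ..., q` are represented by `Fin q`, vertex indices
`i = 1, ..., n` by `Fin n`, internal indices being those with `(i : ℕ) < q`). -/
def ROCPFeasible (n q : ℕ) (d : Fin n → ℕ) (X : Matrix (Fin n) (Fin q) ℝ) : Prop :=
  (∀ i k, 0 ≤ X i k ∧ X i k ≤ 1) ∧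
  (∀ i, ∑ k, X i k = 1) ∧
  (∀ k, (∑ i : Fin n, if (i : ℕ) < q then X i k else 0) = 1) ∧
  (∀ k : Fin q, (k : ℕ) ≠ 0 → (k : ℕ) ≠ q - 1 → ∑ i, ((d i : ℝ) - 2) * X i k = 0) ∧
  (∀ k : Fin q, ((k : ℕ) = 0 ∨ (k : ℕ) = q - 1) → ∑ i, ((d i : ℝ) - 2) * X i k = -1)

/-- A matrix is a symmetric solution if `x_{ik} = x_{i, q-k+1}` for all `i`, `k`. -/
def SymmetricSol {n q : ℕ} (X : Matrix (Fin n) (Fin q) ℝ) : Prop :=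
  ∀ i k, X i k = X i k.rev

/-! With `w = μ ᵥ* X` the objective is `f X = ½ wᵀ D w` for the distance matrix `D k l = |k - l|`.
Since `|k - l| = ∑ₘ ([k ≤ m] - [l ≤ m])²`, one gets `cᵀ D c = -2 ∑ₘ (∑_{k ≤ m} c k)² ≤ 0`
whenever `∑ c = 0`. Reversing the columns replaces `w` by `w ∘ rev` and leaves `D` invariant, so
`f X' = f X`, and with `c = w - w ∘ rev` the midpoint satisfies
`f X'' = (f X + f X') / 2 - cᵀ D c / 8 ≥ f X`. The feasible set is convex and closed under
column reversal, so `X''` is feasible, hence optimal. -/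

noncomputable def distMatrix (q : ℕ) : Matrix (Fin q) (Fin q) ℝ :=
  fun k l => |((k : ℕ) : ℝ) - ((l : ℕ) : ℝ)|

theorem fROCP_eq_dotProduct_distMatrix_mulVec {n q : ℕ} (μ : Fin n → ℝ)
    (X : Matrix (Fin n) (Fin q) ℝ) :
    fROCP μ X = 1 / 2 * (μ ᵥ* X ⬝ᵥ distMatrix q *ᵥ (μ ᵥ* X)) := by
  simp only [fROCP, dotProduct, mulVec, vecMul, distMatrix, sum_mul, mul_sum]
  refine (sum_congr rfl fun i _ => sum_comm).trans (sum_comm.trans (sum_congr rfl fun k _ => ?_))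
  refine (sum_congr rfl fun i _ => sum_comm).trans (sum_comm.trans (sum_congr rfl fun l _ => ?_))
  refine sum_comm.trans (sum_congr rfl fun j _ => sum_congr rfl fun i _ => ?_)
  ring

theorem distMatrix_transpose (q : ℕ) : (distMatrix q)ᵀ = distMatrix q := by
  ext k l; exact abs_sub_comm _ _

theorem distMatrix_submatrix_rev (q : ℕ) :
    (distMatrix q).submatrix Fin.rev Fin.rev = distMatrix q := by
  ext k l
  simp only [submatrix_apply, distMatrix, Fin.val_rev]
  rw [Nat.cast_sub (by omega), Nat.cast_sub (by omega), ← abs_neg]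
  congr 1
  push_cast
  ring

theorem distMatrix_apply_eq_sum_sq {q : ℕ} (k l : Fin q) :
    distMatrix q k l =
      ∑ m : Fin q, ((if k ≤ m then 1 else 0) - (if l ≤ m then 1 else 0) : ℝ) ^ 2 := by
  wlog hkl : k ≤ l generalizing k l
  · rw [← distMatrix_transpose, transpose_apply, this l k (le_of_not_ge hkl)]
    exact sum_congr rfl fun m _ => by ring
  have : ∀ m : Fin q, ((if k ≤ m then 1 else 0) - (if l ≤ m then 1 else 0) : ℝ) ^ 2
      = if m ∈ Ico k l then 1 else 0 := by
    intro m; simp only [mem_Ico, Fin.le_def, Fin.lt_def] at hkl ⊢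
    split_ifs <;> first | omega | norm_num
  rw [sum_congr rfl fun m _ => this m, sum_boole, filter_mem_eq_inter, univ_inter, Fin.card_Ico,
    distMatrix, abs_sub_comm, abs_of_nonneg (by simpa using hkl), Nat.cast_sub hkl]

theorem sum_sum_mul_mul_sub_sq_of_sum_eq_zero {ι R : Type*} [Fintype ι] [CommRing R]
    (c a : ι → R) (hc : ∑ k, c k = 0) :
    ∑ k, ∑ l, c k * c l * (a k - a l) ^ 2 = -2 * (∑ k, c k * a k) ^ 2 := by
  have expand : ∀ k l, c k * c l * (a k - a l) ^ 2 =
      c l * (c k * a k ^ 2) + c k * (c l * a l ^ 2) - 2 * (c k * a k * (c l * a l)) :=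
    fun _ _ => by ring
  simp only [expand, sum_add_distrib, sum_sub_distrib, ← mul_sum, ← sum_mul, hc]
  ring

theorem dotProduct_distMatrix_mulVec_self_nonpos {q : ℕ} (c : Fin q → ℝ) (hc : ∑ k, c k = 0) :
    c ⬝ᵥ distMatrix q *ᵥ c ≤ 0 := by
  have hexpand : c ⬝ᵥ distMatrix q *ᵥ c = ∑ m : Fin q, ∑ k, ∑ l,
      c k * c l * ((if k ≤ m then 1 else 0) - (if l ≤ m then 1 else 0) : ℝ) ^ 2 := by
    simp only [dotProduct, mulVec, distMatrix_apply_eq_sum_sq, mul_sum, sum_mul]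
    refine (sum_congr rfl fun k _ => sum_comm).trans (sum_comm.trans (sum_congr rfl fun m _ =>
      sum_congr rfl fun k _ => sum_congr rfl fun l _ => by ring))
  rw [hexpand]
  refine sum_nonpos fun m _ => ?_
  rw [sum_sum_mul_mul_sub_sq_of_sum_eq_zero c _ hc]
  nlinarith [sq_nonneg (∑ k, c k * (if k ≤ m then 1 else 0 : ℝ))]

theorem dotProduct_mulVec_comp_equiv {ι R : Type*} [Fintype ι] [CommSemiring R]
    (A : Matrix ι ι R) (e : ι ≃ ι) (hA : A.submatrix e e = A) (w : ι → R) :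
    w ∘ e ⬝ᵥ A *ᵥ (w ∘ e) = w ⬝ᵥ A *ᵥ w := by
  conv_lhs => rw [← hA, submatrix_mulVec_equiv, Function.comp_assoc, e.self_comp_symm,
    Function.comp_id]
  exact comp_equiv_dotProduct_comp_equiv _ _ e

theorem dotProduct_mulVec_self_le_midpoint {ι R : Type*} [Fintype ι] [Field R] [LinearOrder R]
    [IsStrictOrderedRing R] (A : Matrix ι ι R) (hA : Aᵀ = A) (v w : ι → R)
    (hw : w ⬝ᵥ A *ᵥ w = v ⬝ᵥ A *ᵥ v) (hneg : (v - w) ⬝ᵥ A *ᵥ (v - w) ≤ 0) :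
    v ⬝ᵥ A *ᵥ v ≤ ((1 / 2 : R) • (v + w)) ⬝ᵥ A *ᵥ ((1 / 2 : R) • (v + w)) := by
  have hsymm : w ⬝ᵥ A *ᵥ v = v ⬝ᵥ A *ᵥ w := by
    rw [dotProduct_mulVec, dotProduct_comm, ← mulVec_transpose, hA]
  simp only [mulVec_sub, mulVec_add, mulVec_smul, sub_dotProduct, dotProduct_sub, add_dotProduct,
    dotProduct_add, smul_dotProduct, dotProduct_smul, smul_eq_mul] at hneg ⊢
  linarith

theorem fROCP_le_fROCP_symmetrize {n q : ℕ} (μ : Fin n → ℝ) (X : Matrix (Fin n) (Fin q) ℝ) :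
    fROCP μ X ≤ fROCP μ (fun i k => (X i k + X i k.rev) / 2) := by
  set w := μ ᵥ* X
  have hvec : μ ᵥ* (fun i k => (X i k + X i k.rev) / 2) = (1 / 2 : ℝ) • (w + w ∘ Fin.rev) := by
    ext k
    simp only [w, vecMul, dotProduct, Pi.smul_apply, Pi.add_apply, Function.comp_apply,
      smul_eq_mul, ← sum_add_distrib, mul_sum]
    exact sum_congr rfl fun i _ => by ring
  have hrev : w ∘ Fin.rev ⬝ᵥ distMatrix q *ᵥ (w ∘ Fin.rev) = w ⬝ᵥ distMatrix q *ᵥ w :=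
    dotProduct_mulVec_comp_equiv _ Fin.revPerm (distMatrix_submatrix_rev q) w
  have hsum : ∑ k, (w - w ∘ Fin.rev) k = 0 := by
    simp only [Pi.sub_apply, Function.comp_apply, sum_sub_distrib, sub_eq_zero]
    exact (Equiv.sum_comp Fin.revPerm w).symm
  rw [fROCP_eq_dotProduct_distMatrix_mulVec μ X,
    fROCP_eq_dotProduct_distMatrix_mulVec μ (fun i k => (X i k + X i k.rev) / 2), hvec]
  gcongr
  exact dotProduct_mulVec_self_le_midpoint _ (distMatrix_transpose q) w _ hrev
    (dotProduct_distMatrix_mulVec_self_nonpos _ hsum)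

theorem ROCPFeasible.submatrix_rev {n q : ℕ} {d : Fin n → ℕ} {X : Matrix (Fin n) (Fin q) ℝ}
    (h : ROCPFeasible n q d X) : ROCPFeasible n q d (X.submatrix id Fin.rev) := by
  obtain ⟨hbox, hrow, hcol, hinner, hend⟩ := h
  refine ⟨fun i k => hbox i k.rev, fun i => ?_, fun k => hcol k.rev, fun k h0 h1 => ?_,
    fun k hk => hend k.rev ?_⟩
  · exact (Equiv.sum_comp Fin.revPerm (X i)).trans (hrow i)
  · exact hinner k.rev (by rw [Fin.val_rev]; omega) (by rw [Fin.val_rev]; omega)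
  · rw [Fin.val_rev]; omega

theorem convex_setOf_ROCPFeasible (n q : ℕ) (d : Fin n → ℕ) :
    Convex ℝ {X | ROCPFeasible n q d X} := by
  rintro X ⟨hbox, hrow, hcol, hinner, hend⟩ Y ⟨hbox', hrow', hcol', hinner', hend'⟩ a b ha hb hab
  have linear : ∀ (s : Finset (Fin n)) (g : Fin n → ℝ) (k : Fin q),
      ∑ i ∈ s, g i * (a • X + b • Y) i k = a * ∑ i ∈ s, g i * X i k + b * ∑ i ∈ s, g i * Y i k := by
    intro s g k
    simp only [mul_sum, ← sum_add_distrib]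
    refine sum_congr rfl fun i _ => ?_
    simp only [Matrix.add_apply, Matrix.smul_apply, smul_eq_mul]
    ring
  refine ⟨fun i k => ?_, fun i => ?_, fun k => ?_, fun k h0 h1 => ?_, fun k hk => ?_⟩
  · simp only [Matrix.add_apply, Matrix.smul_apply, smul_eq_mul]
    constructor <;> nlinarith [hbox i k, hbox' i k]
  · simp only [Matrix.add_apply, Matrix.smul_apply, smul_eq_mul, sum_add_distrib, ← mul_sum,
      hrow, hrow']
    linarith
  · have hinternal := linear {i | (i : ℕ) < q} 1 k
    simp only [Pi.one_apply, one_mul, sum_filter] at hinternal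
    rw [hinternal, hcol, hcol']
    linarith
  · rw [linear, hinner k h0 h1, hinner' k h0 h1]; ring
  · rw [linear, hend k hk, hend' k hk]; linarith

theorem ROCPFeasible.symmetrize {n q : ℕ} {d : Fin n → ℕ} {X : Matrix (Fin n) (Fin q) ℝ}
    (h : ROCPFeasible n q d X) : ROCPFeasible n q d (fun i k => (X i k + X i k.rev) / 2) := by
  have hconv := convex_setOf_ROCPFeasible n q d h h.submatrix_rev
    (by norm_num : (0 : ℝ) ≤ 1 / 2) (by norm_num : (0 : ℝ) ≤ 1 / 2) (by norm_num)
  have hmid : (1 / 2 : ℝ) • X + (1 / 2 : ℝ) • X.submatrix id Fin.rev =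
      fun i k => (X i k + X i k.rev) / 2 := by
    ext i k
    simp only [Matrix.add_apply, Matrix.smul_apply, submatrix_apply, id, smul_eq_mul]
    ring
  exact hmid ▸ hconv

theorem symmetrized_optimal_solution_general (n q : ℕ)
    (d : Fin n → ℕ) (μ : Fin n → ℝ)
    (X : Matrix (Fin n) (Fin q) ℝ)
    (hfeas : ROCPFeasible n q d X)
    (hopt : ∀ Y, ROCPFeasible n q d Y → fROCP μ Y ≤ fROCP μ X) :
    ROCPFeasible n q d (fun i k => (X i k + X i k.rev) / 2) ∧
    SymmetricSol (fun i k => (X i k + X i k.rev) / 2) ∧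
    (∀ Y, ROCPFeasible n q d Y →
      fROCP μ Y ≤ fROCP μ (fun i k => (X i k + X i k.rev) / 2)) := by
  refine ⟨hfeas.symmetrize, fun i k => ?_,
    fun Y hY => (hopt Y hY).trans (fROCP_le_fROCP_symmetrize μ X)⟩
  change _ = (X i k.rev + X i k.rev.rev) / 2
  rw [Fin.rev_rev, add_comm]

theorem symmetrized_optimal_solution (n q : ℕ) (hnq : q ≤ n) (hq : 4 ≤ q)
    (d : Fin n → ℕ) (μ : Fin n → ℝ)
    (hμ : ∀ i, 0 ≤ μ i)
    (hd_anti : ∀ i j : Fin n, i ≤ j → d j ≤ d i)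
    (hd_sum : ∑ i, d i = 2 * (n - 1))
    (hd_int : ∀ i : Fin n, (i : ℕ) < q → 1 < d i)
    (hd_pend : ∀ i : Fin n, q ≤ (i : ℕ) → d i = 1)
    (X : Matrix (Fin n) (Fin q) ℝ)
    (hfeas : ROCPFeasible n q d X)
    (hopt : ∀ Y, ROCPFeasible n q d Y → fROCP μ Y ≤ fROCP μ X) :
    ROCPFeasible n q d (fun i k => (X i k + X i k.rev) / 2) ∧
    SymmetricSol (fun i k => (X i k + X i k.rev) / 2) ∧
    (∀ Y, ROCPFeasible n q d Y →
      fROCP μ Y ≤ fROCP μ (fun i k => (X i k + X i k.rev) / 2)) :=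
  symmetrized_optimal_solution_general n q d μ X hfeas hopt
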